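/- arXiv:2311.02263 — 8 statements merged into one kernel-verified Lean document; each statement's English description precedes it below -/
import Mathlib

section
/- Let H be a real inner product space, let F be a finite nonempty family of vectors in H each of norm 1, and let 0 < ε < 1. Suppose there exists g ∈ H with ‖g‖ = 1 such that ⟨g, f⟩ > ε for every f ∈ F. Then there exists g₀ in the convex hull of F such that ⟨g₀, f⟩ > ε² for every f ∈ F. -/
open scoped RealInnerProductSpace

/-! The point `g₀` of least norm in the convex hull `K` of `F` works. Its projection
characterisation gives `‖g₀‖² ≤ ⟪g₀, f⟫` for all `f ∈ K`, while `⟪g, ·⟫ > ε` on `K` and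
`‖g‖ = 1` force `‖g₀‖ > ε`. -/

section

variable {H : Type*} [NormedAddCommGroup H] [InnerProductSpace ℝ H]

theorem Convex.exists_mem_forall_norm_sq_le_inner {K : Set H} (hK : Convex ℝ K)
    (hKc : IsComplete K) (hne : K.Nonempty) : ∃ v ∈ K, ∀ w ∈ K, ‖v‖ ^ 2 ≤ ⟪v, w⟫ := by
  obtain ⟨v, hvK, hv⟩ := exists_norm_eq_iInf_of_complete_convex hne hKc hK 0
  refine ⟨v, hvK, fun w hw => ?_⟩
  have h := (norm_eq_iInf_iff_real_inner_le_zero hK hvK).mp hv w hw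
  rw [zero_sub, inner_sub_right, inner_neg_left, inner_neg_left,
    real_inner_self_eq_norm_sq] at h
  linarith

theorem lt_inner_of_mem_convexHull {s : Set H} {g : H} {ε : ℝ} (h : ∀ f ∈ s, ε < ⟪g, f⟫)
    {x : H} (hx : x ∈ convexHull ℝ s) : ε < ⟪g, x⟫ :=
  convexHull_min (t := {y | ε < ⟪g, y⟫}) h
    (convex_halfSpace_gt (innerₛₗ ℝ g).isLinear ε) hx

end

theorem covering_lemma_general {H : Type*} [NormedAddCommGroup H] [InnerProductSpace ℝ H]
    (F : Finset H) (hF : F.Nonempty)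
    (ε : ℝ) (hε0 : 0 < ε)
    (g : H) (hg : ‖g‖ = 1) (hgF : ∀ f ∈ F, ε < ⟪g, f⟫) :
    ∃ g₀ ∈ convexHull ℝ (F : Set H), ∀ f ∈ F, ε ^ 2 < ⟪g₀, f⟫ := by
  obtain ⟨g₀, hg₀K, hg₀min⟩ :=
    (convex_convexHull ℝ (F : Set H)).exists_mem_forall_norm_sq_le_inner
      (F.finite_toSet.isCompact_convexHull (𝕜 := ℝ)).isComplete hF.to_set.convexHull
  have hε_lt_norm : ε < ‖g₀‖ := by
    have hinner_le := real_inner_le_norm g g₀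
    rw [hg, one_mul] at hinner_le
    exact (lt_inner_of_mem_convexHull hgF hg₀K).trans_le hinner_le
  refine ⟨g₀, hg₀K, fun f hf => ?_⟩
  calc ε ^ 2 < ‖g₀‖ ^ 2 := pow_lt_pow_left₀ hε_lt_norm hε0.le two_ne_zero
    _ ≤ ⟪g₀, f⟫ := hg₀min f (subset_convexHull ℝ _ hf)

/-- **Covering Lemma.** If every unit vector in a finite nonempty family `F` has inner
product more than `ε` with some fixed unit vector `g`, then some convex combination `g₀`
of elements of `F` has inner product more than `ε²` with every element of `F`. -/
theorem covering_lemma {H : Type*} [NormedAddCommGroup H] [InnerProductSpace ℝ H]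
    (F : Finset H) (hF : F.Nonempty) (hFnorm : ∀ f ∈ F, ‖f‖ = 1)
    (ε : ℝ) (hε0 : 0 < ε) (hε1 : ε < 1)
    (g : H) (hg : ‖g‖ = 1) (hgF : ∀ f ∈ F, ε < ⟪g, f⟫) :
    ∃ g₀ ∈ convexHull ℝ (F : Set H), ∀ f ∈ F, ε ^ 2 < ⟪g₀, f⟫ :=
  covering_lemma_general F hF ε hε0 g hg hgF
end

section
/- Let H be a real inner product space, K ⊆ H a convex set, 0 < ε < 1, and g ∈ H with ‖g‖ = 1. Suppose g₀ ∈ K satisfies ⟨g₀, g⟩ > ε and ‖g₀‖ ≤ ‖v‖ for every v ∈ K with ⟨v, g⟩ > ε (i.e. g₀ is a norm-minimizer over {v ∈ K : ⟨v, g⟩ > ε}). Then for every f ∈ K with ‖f‖ ≤ 1 and ⟨f, g⟩ > ε, one has ⟨g₀, f⟩ > ε². -/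
open scoped RealInnerProductSpace

/- First-order optimality: along the segment from `g₀` to `f`, which stays in the convex slice,
`‖·‖²` has directional derivative `2 ⟪g₀, f - g₀⟫ ≥ 0`, so `‖g₀‖² ≤ ⟪g₀, f⟫`; and the slice
condition with `‖g‖ = 1` forces `ε < ‖g₀‖`. -/

section

variable {E : Type*} [NormedAddCommGroup E] [InnerProductSpace ℝ E]

theorem Convex.sq_norm_le_inner_of_isMinOn_norm {s : Set E} (hs : Convex ℝ s) {x₀ y : E}
    (hmin : IsMinOn (‖·‖) s x₀) (hx₀ : x₀ ∈ s) (hy : y ∈ s) : ‖x₀‖ ^ 2 ≤ ⟪x₀, y⟫ := by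
  have hmin_sq : IsLocalMinOn (fun x : E => ‖x‖ ^ 2) s x₀ :=
    IsMinOn.localize fun _ hx => pow_le_pow_left₀ (norm_nonneg _) (hmin hx) 2
  have hderiv := hmin_sq.hasFDerivWithinAt_nonneg
    (hasStrictFDerivAt_norm_sq x₀).hasFDerivAt.hasFDerivWithinAt
    (sub_mem_posTangentConeAt_of_segment_subset (hs.segment_subset hx₀ hy))
  simp only [smul_apply, innerSL_apply_apply, inner_sub_right,
    real_inner_self_eq_norm_sq, nsmul_eq_mul, Nat.cast_ofNat] at hderiv
  linarith

theorem convex_setOf_lt_inner (g : E) (r : ℝ) : Convex ℝ {v : E | r < ⟪v, g⟫} :=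
  convex_halfSpace_gt ⟨fun _ _ => inner_add_left .., fun _ _ => real_inner_smul_left ..⟩ r

end

theorem norm_minimizer_covering_general {H : Type*} [NormedAddCommGroup H] [InnerProductSpace ℝ H]
    (K : Set H) (hK : Convex ℝ K)
    (ε : ℝ) (hε0 : 0 < ε)
    (g : H) (hg : ‖g‖ = 1)
    (g₀ : H) (hg₀K : g₀ ∈ K) (hg₀g : ε < ⟪g₀, g⟫)
    (hmin : ∀ v ∈ K, ε < ⟪v, g⟫ → ‖g₀‖ ≤ ‖v‖) :
    ∀ f ∈ K, ‖f‖ ≤ 1 → ε < ⟪f, g⟫ → ε ^ 2 < ⟪g₀, f⟫ := by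
  intro f hfK _ hfg
  have hslice : Convex ℝ (K ∩ {v | ε < ⟪v, g⟫}) := hK.inter (convex_setOf_lt_inner g ε)
  have hg₀_norm : ε < ‖g₀‖ :=
    hg₀g.trans_le (by simpa [hg] using real_inner_le_norm g₀ g)
  calc ε ^ 2 < ‖g₀‖ ^ 2 := by gcongr
    _ ≤ ⟪g₀, f⟫ := hslice.sq_norm_le_inner_of_isMinOn_norm
      (fun v hv => hmin v hv.1 hv.2) ⟨hg₀K, hg₀g⟩ ⟨hfK, hfg⟩

/-- The norm-minimizer `g₀` over the slice `{v ∈ K : ⟪v, g⟫ > ε}` of a convex set `K`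
has inner product more than `ε²` with every `f ∈ K` of norm at most 1 in that slice. -/
theorem norm_minimizer_covering {H : Type*} [NormedAddCommGroup H] [InnerProductSpace ℝ H]
    (K : Set H) (hK : Convex ℝ K)
    (ε : ℝ) (hε0 : 0 < ε) (hε1 : ε < 1)
    (g : H) (hg : ‖g‖ = 1)
    (g₀ : H) (hg₀K : g₀ ∈ K) (hg₀g : ε < ⟪g₀, g⟫)
    (hmin : ∀ v ∈ K, ε < ⟪v, g⟫ → ‖g₀‖ ≤ ‖v‖) :
    ∀ f ∈ K, ‖f‖ ≤ 1 → ε < ⟪f, g⟫ → ε ^ 2 < ⟪g₀, f⟫ :=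
  norm_minimizer_covering_general K hK ε hε0 g hg g₀ hg₀K hg₀g hmin
end

section
/- (q-ary Johnson bound) Let q ≥ 2 and n ≥ 1 be integers, let 0 ≤ β ≤ 1, and let C ⊆ (Fin n → Fin q) be a code such that every two distinct codewords h₁, h₂ ∈ C satisfy Δ(h₁, h₂) ≥ (1 − 1/q)·(1 − β). Then for every g : Fin n → Fin q, the number of codewords h ∈ C with Δ(g, h) < (1 − 1/q)·(1 − √β) is at most (q − 1)·n + 1. -/
/-!
Send a word `f` to its one-hot vector in `ℝ^(n × q)` minus the uniform vector with entries
`1/q`. These centred vectors satisfy `⟪f̃, h̃⟫ = n (1 - 1/q - Δ(f, h))` and lie in the kernel of the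
map summing each block of `q` coordinates, a space of dimension `n (q - 1)`. For the codewords `h`
close to `g`, the vectors `h̃ - √β • g̃` have pairwise non-positive inner products and positive
inner product with `g̃`, so they are linearly independent; hence there are at most `n (q - 1)`
of them.
-/

/-- Fractional Hamming distance between two words of length `n`. -/
noncomputable def fracDist {n q : ℕ} (f g : Fin n → Fin q) : ℝ :=
  (hammingDist f g : ℝ) / n

open Finset RealInnerProductSpace

theorem linearIndependent_of_pairwise_inner_nonpos {E ι : Type*} [NormedAddCommGroup E]
    [InnerProductSpace ℝ E] [Fintype ι] {u : ι → E} {w : E}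
    (hu : Pairwise fun i j => ⟪u i, u j⟫ ≤ 0) (hw : ∀ i, 0 < ⟪u i, w⟫) :
    LinearIndependent ℝ u := by
  rw [Fintype.linearIndependent_iff]
  intro a ha
  have eq_zero_of_nonneg : ∀ b : ι → ℝ, (∀ i, 0 ≤ b i) → ∑ i, b i • u i = 0 → ∀ i, b i = 0 := by
    intro b hb hsum i
    have hsum_w : ∑ j, b j * ⟪u j, w⟫ = 0 := by
      simpa [sum_inner, real_inner_smul_left] using congrArg (⟪·, w⟫) hsum
    have hi := (sum_eq_zero_iff_of_nonneg fun j _ ↦ mul_nonneg (hb j) (hw j).le).mp hsum_w i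
      (mem_univ i)
    exact (mul_eq_zero.mp hi).resolve_right (hw i).ne'
  -- Both sums equal `v := ∑ a⁺ • u`, so `⟪v, v⟫` is a sum of cross terms `a⁺ᵢ a⁻ⱼ ⟪uᵢ, uⱼ⟫ ≤ 0`.
  have hv : ∑ i, (a i)⁻ • u i = ∑ i, (a i)⁺ • u i := by
    rw [← sub_eq_zero, ← sum_sub_distrib]
    simpa [← sub_smul, posPart_sub_negPart] using ha
  have hvv : ⟪∑ i, (a i)⁺ • u i, ∑ j, (a j)⁻ • u j⟫ ≤ 0 := by
    simp only [sum_inner, inner_sum, real_inner_smul_left, real_inner_smul_right]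
    refine sum_nonpos fun i _ ↦ sum_nonpos fun j _ ↦ ?_
    rcases eq_or_ne i j with rfl | hij
    · rcases le_total (a i) 0 with h | h <;> simp [h]
    · exact mul_nonpos_of_nonneg_of_nonpos (negPart_nonneg _)
        (mul_nonpos_of_nonneg_of_nonpos (posPart_nonneg _) (hu hij.symm))
  rw [hv] at hvv
  have hv0 := inner_self_eq_zero.mp (le_antisymm hvv real_inner_self_nonneg)
  intro i
  rw [← posPart_sub_negPart (a i), eq_zero_of_nonneg _ (fun _ ↦ posPart_nonneg _) hv0 i,
    eq_zero_of_nonneg _ (fun _ ↦ negPart_nonneg _) (hv.trans hv0) i, sub_zero]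

theorem linearIndependent_sub_smul_of_inner_le {E ι : Type*} [NormedAddCommGroup E]
    [InnerProductSpace ℝ E] [Fintype ι] {x : ι → E} {y : E} {α : ℝ} (hα : 0 ≤ α)
    (hxy : ∀ i, α * ⟪y, y⟫ < ⟪y, x i⟫) (hxx : Pairwise fun i j => ⟪x i, x j⟫ ≤ α ^ 2 * ⟪y, y⟫) :
    LinearIndependent ℝ fun i ↦ x i - α • y := by
  refine linearIndependent_of_pairwise_inner_nonpos (w := y) (fun i j hij ↦ ?_) fun i ↦ ?_
  · simp only [inner_sub_left, inner_sub_right, real_inner_smul_left, real_inner_smul_right,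
      real_inner_comm y (x i)]
    nlinarith [mul_le_mul_of_nonneg_left (hxy i).le hα, mul_le_mul_of_nonneg_left (hxy j).le hα,
      hxx hij]
  · simp only [inner_sub_left, real_inner_smul_left, real_inner_comm y (x i)]
    linarith [hxy i]

section OneHot

variable {ι α : Type*} [Fintype α]

variable (ι α) in
noncomputable def blockSum : EuclideanSpace ℝ (ι × α) →ₗ[ℝ] ι → ℝ where
  toFun v i := ∑ a, v (i, a)
  map_add' _ _ := funext fun _ ↦ sum_add_distrib
  map_smul' _ _ := funext fun _ ↦ (mul_sum ..).symm

theorem blockSum_surjective [Nonempty α] : Function.Surjective (blockSum ι α) := by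
  intro x
  refine ⟨WithLp.toLp 2 fun p ↦ x p.1 / Fintype.card α, funext fun i ↦ ?_⟩
  simp [blockSum]
  field_simp

theorem finrank_ker_blockSum [Fintype ι] [Nonempty α] :
    Module.finrank ℝ (LinearMap.ker (blockSum ι α)) = Fintype.card ι * (Fintype.card α - 1) := by
  have h := LinearMap.finrank_range_add_finrank_ker (blockSum ι α)
  rw [LinearMap.range_eq_top.mpr blockSum_surjective, finrank_top, finrank_euclideanSpace,
    Module.finrank_fintype_fun_eq_card, Fintype.card_prod] at h
  rw [Nat.mul_sub_one]
  omega

variable (ι α) in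
noncomputable def uniformVec : EuclideanSpace ℝ (ι × α) :=
  WithLp.toLp 2 fun _ ↦ (Fintype.card α : ℝ)⁻¹

theorem inner_uniformVec_uniformVec [Fintype ι] [Nonempty α] :
    ⟪uniformVec ι α, uniformVec ι α⟫ = Fintype.card ι / Fintype.card α := by
  rw [PiLp.inner_apply]
  simp [uniformVec]
  field_simp

variable [DecidableEq α]

noncomputable def oneHot (f : ι → α) : EuclideanSpace ℝ (ι × α) :=
  WithLp.toLp 2 fun p ↦ if f p.1 = p.2 then 1 else 0

theorem blockSum_oneHot_sub_uniformVec [Nonempty α] (f : ι → α) :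
    blockSum ι α (oneHot f - uniformVec ι α) = 0 := by
  ext i
  simp [blockSum, oneHot, uniformVec]

noncomputable def centeredOneHot [Nonempty α] (f : ι → α) : LinearMap.ker (blockSum ι α) :=
  ⟨oneHot f - uniformVec ι α, blockSum_oneHot_sub_uniformVec f⟩

variable [Fintype ι]

theorem inner_oneHot_oneHot (f h : ι → α) :
    ⟪oneHot f, oneHot h⟫ = Fintype.card ι - hammingDist f h := by
  have hrow (i : ι) : ∑ a, (if f i = a then (1 : ℝ) else 0) * (if h i = a then 1 else 0) =
      if f i = h i then 1 else 0 := by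
    by_cases hfh : f i = h i <;> simp [hfh]
  simp only [oneHot, PiLp.inner_apply, Real.inner_apply, Fintype.sum_prod_type, hrow, sum_boole,
    hammingDist, eq_sub_iff_add_eq]
  exact_mod_cast card_filter_add_card_filter_not _

theorem inner_oneHot_uniformVec (f : ι → α) :
    ⟪oneHot f, uniformVec ι α⟫ = Fintype.card ι / Fintype.card α := by
  simp [oneHot, uniformVec, PiLp.inner_apply, Fintype.sum_prod_type, div_eq_mul_inv]

theorem inner_centeredOneHot [Nonempty α] (f h : ι → α) :
    ⟪centeredOneHot f, centeredOneHot h⟫ =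
      Fintype.card ι * (1 - (Fintype.card α : ℝ)⁻¹) - hammingDist f h := by
  rw [Submodule.coe_inner, centeredOneHot, centeredOneHot, inner_sub_left, inner_sub_right,
    inner_sub_right, inner_oneHot_oneHot, inner_oneHot_uniformVec, real_inner_comm, inner_oneHot_uniformVec,
    inner_uniformVec_uniformVec]
  ring

end OneHot

theorem fracDist_self {n q : ℕ} (f : Fin n → Fin q) : fracDist f f = 0 := by
  simp [fracDist]

theorem inner_centeredOneHot_eq_fracDist {n q : ℕ} [NeZero q] (hn : n ≠ 0) (f h : Fin n → Fin q) :
    ⟪centeredOneHot f, centeredOneHot h⟫ = n * (1 - 1 / (q : ℝ) - fracDist f h) := by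
  rw [inner_centeredOneHot, fracDist, Fintype.card_fin, Fintype.card_fin]
  field_simp

theorem johnson_bound_general (q n : ℕ) (hq : 2 ≤ q) (hn : 1 ≤ n)
    (β : ℝ) (hβ0 : 0 ≤ β)
    (C : Set (Fin n → Fin q))
    (hdist : ∀ h₁ ∈ C, ∀ h₂ ∈ C, h₁ ≠ h₂ →
      (1 - 1 / (q : ℝ)) * (1 - β) ≤ fracDist h₁ h₂)
    (g : Fin n → Fin q) :
    Set.ncard {h | h ∈ C ∧ fracDist g h < (1 - 1 / (q : ℝ)) * (1 - Real.sqrt β)}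
      ≤ (q - 1) * n + 1 := by
  have : NeZero q := ⟨by omega⟩
  set S := {h | h ∈ C ∧ fracDist g h < (1 - 1 / (q : ℝ)) * (1 - Real.sqrt β)}
  have : Fintype S := S.toFinite.fintype
  have hn0 : (0 : ℝ) < n := by exact_mod_cast hn
  have hinner := inner_centeredOneHot_eq_fracDist (q := q) (n := n) (by omega)
  have hli : LinearIndependent ℝ fun h : S ↦ centeredOneHot h.1 - √β • centeredOneHot g := by
    refine linearIndependent_sub_smul_of_inner_le (Real.sqrt_nonneg β) (fun h ↦ ?_)
      fun h h' hne ↦ ?_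
    · have := mul_lt_mul_of_pos_left h.2.2 hn0
      rw [hinner, hinner, fracDist_self]
      linarith
    · have := mul_le_mul_of_nonneg_left
        (hdist h h.2.1 h' h'.2.1 (Subtype.coe_injective.ne hne)) hn0.le
      dsimp only
      rw [hinner, hinner, fracDist_self, Real.sq_sqrt hβ0]
      linarith
  calc S.ncard = Fintype.card S := Nat.card_coe_set_eq S ▸ Nat.card_eq_fintype_card
    _ ≤ Module.finrank ℝ (LinearMap.ker (blockSum (Fin n) (Fin q))) := hli.fintype_card_le_finrank
    _ = n * (q - 1) := by simp [finrank_ker_blockSum]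
    _ ≤ (q - 1) * n + 1 := by rw [Nat.mul_comm]; omega

/-- **q-ary Johnson bound.** If a code `C ⊆ [q]^n` has minimum fractional distance at least
`(1 - 1/q)(1 - β)`, then for every received word `g` the number of codewords within
fractional distance `(1 - 1/q)(1 - √β)` of `g` is at most `(q-1)·n + 1`. -/
theorem johnson_bound (q n : ℕ) (hq : 2 ≤ q) (hn : 1 ≤ n)
    (β : ℝ) (hβ0 : 0 ≤ β) (hβ1 : β ≤ 1)
    (C : Set (Fin n → Fin q))
    (hdist : ∀ h₁ ∈ C, ∀ h₂ ∈ C, h₁ ≠ h₂ →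
      (1 - 1 / (q : ℝ)) * (1 - β) ≤ fracDist h₁ h₂)
    (g : Fin n → Fin q) :
    Set.ncard {h | h ∈ C ∧ fracDist g h < (1 - 1 / (q : ℝ)) * (1 - Real.sqrt β)}
      ≤ (q - 1) * n + 1 :=
  johnson_bound_general q n hq hn β hβ0 C hdist g
end

section
/- (Expander mixing lemma for vector-valued functions) Let n, d, N ≥ 1, let λ ≥ 0, and let σ : Fin n × Fin d ≃ Fin n × Fin d be a bijection specifying a d-regular bipartite graph that is λ-mixing. Then for any collections of vectors v : Fin n → EuclideanSpace ℝ (Fin N) and u : Fin n → EuclideanSpace ℝ (Fin N): |𝔼_{(ℓ,i) ∈ Fin n × Fin d} ⟨v ℓ, u (fst (σ (ℓ,i)))⟩ − 𝔼_{ℓ ∈ Fin n} 𝔼_{r ∈ Fin n} ⟨v ℓ, u r⟩| ≤ λ · sqrt(𝔼_{ℓ} ‖v ℓ‖²) · sqrt(𝔼_{r} ‖u r‖²), where all expectations are uniform averages. -/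
open scoped RealInnerProductSpace

/-- A `d`-regular bipartite graph on left/right vertex sets `Fin n` with edge set
`Fin n × Fin d` (edge `(ℓ,i)` is the `i`-th edge of left vertex `ℓ`, and `σ (ℓ,i) = (r,j)`
means it is the `j`-th edge of right vertex `r`) is `λ`-mixing if the expander mixing
inequality holds for all real-valued functions on the two sides. -/
def IsMixing (n d : ℕ) (σ : Fin n × Fin d ≃ Fin n × Fin d) (lam : ℝ) : Prop :=
  ∀ F G : Fin n → ℝ,
    |(∑ e : Fin n × Fin d, F e.1 * G (σ e).1) / ((n : ℝ) * d)
        - ((∑ ℓ, F ℓ) / (n : ℝ)) * ((∑ r, G r) / (n : ℝ))|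
      ≤ lam * Real.sqrt ((∑ ℓ, F ℓ ^ 2) / (n : ℝ)) * Real.sqrt ((∑ r, G r ^ 2) / (n : ℝ))

/-- **Expander mixing lemma for vector-valued functions.** -/
theorem eml_vector_valued (n d N : ℕ) (hn : 1 ≤ n) (hd : 1 ≤ d) (hN : 1 ≤ N)
    (lam : ℝ) (hlam : 0 ≤ lam)
    (σ : Fin n × Fin d ≃ Fin n × Fin d) (hmix : IsMixing n d σ lam)
    (v u : Fin n → EuclideanSpace ℝ (Fin N)) :
    |(∑ e : Fin n × Fin d, ⟪v e.1, u (σ e).1⟫) / ((n : ℝ) * d)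
        - (∑ ℓ, ∑ r, ⟪v ℓ, u r⟫) / ((n : ℝ) * n)|
      ≤ lam * Real.sqrt ((∑ ℓ, ‖v ℓ‖ ^ 2) / (n : ℝ))
          * Real.sqrt ((∑ r, ‖u r‖ ^ 2) / (n : ℝ)) := by
  classical
  have hinner : ∀ (x y : EuclideanSpace ℝ (Fin N)), ⟪x, y⟫ = ∑ k, x k * y k := by
    intro x y
    simp [PiLp.inner_apply, RCLike.inner_apply, mul_comm]
  have hnorm : ∀ x : EuclideanSpace ℝ (Fin N), ‖x‖ ^ 2 = ∑ k, x k ^ 2 := by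
    intro x
    rw [EuclideanSpace.norm_eq, Real.sq_sqrt (by positivity)]
    simp [sq_abs]
  set T : Fin N → ℝ := fun k =>
    (∑ e : Fin n × Fin d, v e.1 k * u (σ e).1 k) / ((n : ℝ) * d)
      - ((∑ ℓ, v ℓ k) / (n : ℝ)) * ((∑ r, u r k) / (n : ℝ)) with hT
  set A : Fin N → ℝ := fun k => (∑ ℓ, v ℓ k ^ 2) / (n : ℝ) with hA
  set B : Fin N → ℝ := fun k => (∑ r, u r k ^ 2) / (n : ℝ) with hB
  have hA0 : ∀ k, 0 ≤ A k := fun k => by positivity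
  have hB0 : ∀ k, 0 ≤ B k := fun k => by positivity
  have hrw1 : (∑ e : Fin n × Fin d, ⟪v e.1, u (σ e).1⟫) / ((n : ℝ) * d)
      = ∑ k, (∑ e : Fin n × Fin d, v e.1 k * u (σ e).1 k) / ((n : ℝ) * d) := by
    rw [← Finset.sum_div]
    congr 1
    simp_rw [hinner]
    exact Finset.sum_comm
  have hrw2 : (∑ ℓ, ∑ r, ⟪v ℓ, u r⟫) / ((n : ℝ) * n)
      = ∑ k, ((∑ ℓ, v ℓ k) / (n : ℝ)) * ((∑ r, u r k) / (n : ℝ)) := by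
    have h1 : ∑ ℓ, ∑ r, ⟪v ℓ, u r⟫ = ∑ k, (∑ ℓ, v ℓ k) * (∑ r, u r k) := by
      simp_rw [hinner]
      have : ∀ ℓ : Fin n, ∑ r, ∑ k, v ℓ k * u r k = ∑ k, v ℓ k * (∑ r, u r k) := by
        intro ℓ
        rw [Finset.sum_comm]
        simp [Finset.mul_sum]
      simp_rw [this]
      rw [Finset.sum_comm]
      simp [Finset.sum_mul]
    rw [h1, Finset.sum_div]
    congr 1; ext k
    field_simp
  have hLHS : (∑ e : Fin n × Fin d, ⟪v e.1, u (σ e).1⟫) / ((n : ℝ) * d)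
      - (∑ ℓ, ∑ r, ⟪v ℓ, u r⟫) / ((n : ℝ) * n) = ∑ k, T k := by
    rw [hrw1, hrw2, ← Finset.sum_sub_distrib]
  rw [hLHS]
  have hstep : ∀ k, |T k| ≤ lam * Real.sqrt (A k) * Real.sqrt (B k) := by
    intro k
    exact hmix (fun ℓ => v ℓ k) (fun r => u r k)
  calc |∑ k, T k| ≤ ∑ k, |T k| := Finset.abs_sum_le_sum_abs _ _
    _ ≤ ∑ k, lam * Real.sqrt (A k) * Real.sqrt (B k) :=
        Finset.sum_le_sum fun k _ => hstep k
    _ = lam * ∑ k, Real.sqrt (A k) * Real.sqrt (B k) := by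
        rw [Finset.mul_sum]; congr 1; ext k; ring
    _ ≤ lam * (Real.sqrt (∑ k, A k) * Real.sqrt (∑ k, B k)) := by
        apply mul_le_mul_of_nonneg_left _ hlam
        have hCS : (∑ k, Real.sqrt (A k) * Real.sqrt (B k)) ^ 2
            ≤ (∑ k, Real.sqrt (A k) ^ 2) * (∑ k, Real.sqrt (B k) ^ 2) :=
          Finset.sum_mul_sq_le_sq_mul_sq _ _ _
        simp_rw [Real.sq_sqrt (hA0 _), Real.sq_sqrt (hB0 _)] at hCS
        have h1 : 0 ≤ ∑ k, Real.sqrt (A k) * Real.sqrt (B k) :=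
          Finset.sum_nonneg fun k _ => mul_nonneg (Real.sqrt_nonneg _) (Real.sqrt_nonneg _)
        calc ∑ k, Real.sqrt (A k) * Real.sqrt (B k)
            = Real.sqrt ((∑ k, Real.sqrt (A k) * Real.sqrt (B k)) ^ 2) :=
              (Real.sqrt_sq h1).symm
          _ ≤ Real.sqrt ((∑ k, A k) * (∑ k, B k)) := Real.sqrt_le_sqrt hCS
          _ = Real.sqrt (∑ k, A k) * Real.sqrt (∑ k, B k) := Real.sqrt_mul
              (Finset.sum_nonneg fun k _ => hA0 k) _
    _ = lam * Real.sqrt ((∑ ℓ, ‖v ℓ‖ ^ 2) / (n : ℝ))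
          * Real.sqrt ((∑ r, ‖u r‖ ^ 2) / (n : ℝ)) := by
        have hAs : ∑ k, A k = (∑ ℓ, ‖v ℓ‖ ^ 2) / (n : ℝ) := by
          simp_rw [hA, ← Finset.sum_div, hnorm]
          rw [Finset.sum_comm]
        have hBs : ∑ k, B k = (∑ r, ‖u r‖ ^ 2) / (n : ℝ) := by
          simp_rw [hB, ← Finset.sum_div, hnorm]
          rw [Finset.sum_comm]
        rw [hAs, hBs, mul_assoc]
end

section
/- (Distance of Tanner codes, Sipser–Spielman/Zémor) Let n, d ≥ 1, q ≥ 2, let 0 ≤ λ and 0 ≤ δ₀ ≤ 1, let σ : Fin n × Fin d ≃ Fin n × Fin d be a bijection specifying a d-regular bipartite graph that is λ-mixing, and let C₀ ⊆ (Fin d → Fin q) be a code in which any two distinct codewords differ in at least δ₀·d coordinates. Let f, g : Fin n × Fin d → Fin q with f ≠ g be such that every left row and every right row of both f and g belongs to C₀. Then the fraction of edges e ∈ Fin n × Fin d with f(e) ≠ g(e) is at least δ₀·(δ₀ − λ). -/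
open Finset

theorem mul_sub_le_of_le_mul_add_mul_sqrt {δ lam a b D : ℝ} (hδ : 0 ≤ δ)
    (ha : 0 < a) (hb : 0 < b) (hDa : δ * a ≤ D) (hDb : δ * b ≤ D)
    (hD : D ≤ a * b + lam * √a * √b) :
    δ * (δ - lam) ≤ D := by
  have hab : 0 < √a * √b := by positivity
  have hgeom : δ * (√a * √b) ≤ D := by
    have : √a * √b ≤ max a b := by
      calc √a * √b ≤ √(max a b) * √(max a b) := by gcongr <;> simp
        _ = max a b := Real.mul_self_sqrt (ha.le.trans (le_max_left a b))
    calc δ * (√a * √b) ≤ δ * max a b := by gcongr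
      _ ≤ D := by rw [mul_max_of_nonneg _ _ hδ]; exact max_le hDa hDb
  have hroot : δ - lam ≤ √a * √b := by
    -- divide `δ √(ab) ≤ D ≤ ab + λ √(ab)` by `√(ab) > 0`
    have hsq : √a * √b * (√a * √b) = a * b := by
      rw [mul_mul_mul_comm, Real.mul_self_sqrt ha.le, Real.mul_self_sqrt hb.le]
    nlinarith
  calc δ * (δ - lam) ≤ δ * (√a * √b) := by gcongr
    _ ≤ D := hgeom

section Rows

variable {ι κ α : Type*} [Fintype ι] [Fintype κ] [DecidableEq α]

theorem hammingDist_comp_equiv {β : Type*} [Fintype β] (e : β ≃ ι) (x y : ι → α) :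
    hammingDist (x ∘ e) (y ∘ e) = hammingDist x y := by
  simp only [hammingDist]
  exact card_equiv e (by simp)

theorem hammingDist_eq_sum_hammingDist_rows (x y : ι × κ → α) :
    hammingDist x y = ∑ i, hammingDist (fun j => x (i, j)) (fun j => y (i, j)) := by
  simp only [hammingDist, card_filter, Fintype.sum_prod_type]



def disagreeingRows (x y : ι × κ → α) : Finset ι :=
  {i | (fun j => x (i, j)) ≠ fun j => y (i, j)}

theorem fst_mem_disagreeingRows {x y : ι × κ → α} {e : ι × κ} (h : x e ≠ y e) :
    e.1 ∈ disagreeingRows x y := by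
  simp only [disagreeingRows, mem_filter, mem_univ, true_and]
  exact fun hrow => h (congrFun hrow e.2)

theorem mul_card_disagreeingRows_le_hammingDist {C : Set (κ → α)} {δ : ℝ}
    (hC : ∀ u ∈ C, ∀ v ∈ C, u ≠ v → δ ≤ hammingDist u v) {x y : ι × κ → α}
    (hx : ∀ i, (fun j => x (i, j)) ∈ C) (hy : ∀ i, (fun j => y (i, j)) ∈ C) :
    δ * #(disagreeingRows x y) ≤ hammingDist x y := by
  rw [hammingDist_eq_sum_hammingDist_rows, Nat.cast_sum, mul_comm, ← nsmul_eq_mul, ← sum_const]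
  calc ∑ _i ∈ disagreeingRows x y, δ
      ≤ ∑ i ∈ disagreeingRows x y, (hammingDist (fun j => x (i, j)) (fun j => y (i, j)) : ℝ) :=
        sum_le_sum fun i hi => hC _ (hx i) _ (hy i) (mem_filter.1 hi).2
    _ ≤ _ := sum_le_sum_of_subset_of_nonneg (subset_univ _) fun _ _ _ => Nat.cast_nonneg _

end Rows

theorem IsMixing.card_edges_le {n d : ℕ} {σ : Fin n × Fin d ≃ Fin n × Fin d} {lam : ℝ}
    (h : IsMixing n d σ lam) (S T : Finset (Fin n)) :
    (#{e | e.1 ∈ S ∧ (σ e).1 ∈ T} : ℝ) / (n * d) ≤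
      #S / n * (#T / n) + lam * √(#S / n) * √(#T / n) := by
  have hsum (U : Finset (Fin n)) : ∑ i, (if i ∈ U then (1 : ℝ) else 0) = #U := by
    simp
  have hsq (U : Finset (Fin n)) : ∑ i, (if i ∈ U then (1 : ℝ) else 0) ^ 2 = #U := by
    simp [ite_pow]
  have hmix := (abs_le.1 (h (fun i => if i ∈ S then 1 else 0) (fun i => if i ∈ T then 1 else 0))).2
  simp only [ite_zero_mul_ite_zero, mul_one, sum_boole, hsum, hsq] at hmix
  linarith

theorem tanner_code_distance_general (n d q : ℕ)
    (lam δ₀ : ℝ) (hδ₀0 : 0 ≤ δ₀)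
    (σ : Fin n × Fin d ≃ Fin n × Fin d) (hmix : IsMixing n d σ lam)
    (C₀ : Set (Fin d → Fin q))
    (hC₀ : ∀ u ∈ C₀, ∀ v ∈ C₀, u ≠ v → δ₀ * d ≤ (hammingDist u v : ℝ))
    (f g : Fin n × Fin d → Fin q) (hfg : f ≠ g)
    (hfL : ∀ ℓ : Fin n, (fun i => f (ℓ, i)) ∈ C₀)
    (hfR : ∀ r : Fin n, (fun j => f (σ.symm (r, j))) ∈ C₀)
    (hgL : ∀ ℓ : Fin n, (fun i => g (ℓ, i)) ∈ C₀)
    (hgR : ∀ r : Fin n, (fun j => g (σ.symm (r, j))) ∈ C₀) :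
    δ₀ * (δ₀ - lam) ≤
      ((Finset.univ.filter fun e : Fin n × Fin d => f e ≠ g e).card : ℝ) / ((n : ℝ) * d) := by
  change δ₀ * (δ₀ - lam) ≤ (hammingDist f g : ℝ) / (n * d)
  obtain ⟨e₀, he₀⟩ := Function.ne_iff.1 hfg
  have hn : (0 : ℝ) < n := Nat.cast_pos.2 (Fin.pos e₀.1)
  have hd : (0 : ℝ) < d := Nat.cast_pos.2 (Fin.pos e₀.2)
  set S := disagreeingRows f g
  -- the right rows of `f` are the rows of `f ∘ σ.symm`
  set T := disagreeingRows (f ∘ σ.symm) (g ∘ σ.symm)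
  have hσ {e} (h : f e ≠ g e) : (σ e).1 ∈ T :=
    fst_mem_disagreeingRows (x := f ∘ σ.symm) (by simpa using h)
  have hS : δ₀ * d * #S ≤ hammingDist f g := mul_card_disagreeingRows_le_hammingDist hC₀ hfL hgL
  have hT : δ₀ * d * #T ≤ hammingDist f g := by
    rw [← hammingDist_comp_equiv σ.symm]
    exact mul_card_disagreeingRows_le_hammingDist hC₀ hfR hgR
  have hedges : hammingDist f g ≤ #{e | e.1 ∈ S ∧ (σ e).1 ∈ T} :=
    card_le_card fun e he => by
      have h := (mem_filter.1 he).2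
      exact mem_filter.2 ⟨mem_univ e, fst_mem_disagreeingRows h, hσ h⟩
  have hrel {x : ℝ} (hx : δ₀ * d * x ≤ hammingDist f g) :
      δ₀ * (x / n) ≤ hammingDist f g / (n * d) := by
    rw [le_div_iff₀ (by positivity)]; field_simp; linarith
  refine mul_sub_le_of_le_mul_add_mul_sqrt hδ₀0 ?_ ?_ (hrel hS) (hrel hT) ?_
  · exact div_pos (Nat.cast_pos.2 (card_pos.2 ⟨_, fst_mem_disagreeingRows he₀⟩)) hn
  · exact div_pos (Nat.cast_pos.2 (card_pos.2 ⟨_, hσ he₀⟩)) hn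
  · grw [hedges]
    exact hmix.card_edges_le S T

/-- **Distance of Tanner codes (Sipser–Spielman / Zémor).** If the inner code `C₀` has
minimum distance `δ₀·d` and the graph is `λ`-mixing, then any two distinct words all of
whose left and right rows lie in `C₀` differ on at least a `δ₀(δ₀ - λ)` fraction of edges. -/
theorem tanner_code_distance (n d q : ℕ) (hn : 1 ≤ n) (hd : 1 ≤ d) (hq : 2 ≤ q)
    (lam δ₀ : ℝ) (hlam : 0 ≤ lam) (hδ₀0 : 0 ≤ δ₀) (hδ₀1 : δ₀ ≤ 1)
    (σ : Fin n × Fin d ≃ Fin n × Fin d) (hmix : IsMixing n d σ lam)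
    (C₀ : Set (Fin d → Fin q))
    (hC₀ : ∀ u ∈ C₀, ∀ v ∈ C₀, u ≠ v → δ₀ * d ≤ (hammingDist u v : ℝ))
    (f g : Fin n × Fin d → Fin q) (hfg : f ≠ g)
    (hfL : ∀ ℓ : Fin n, (fun i => f (ℓ, i)) ∈ C₀)
    (hfR : ∀ r : Fin n, (fun j => f (σ.symm (r, j))) ∈ C₀)
    (hgL : ∀ ℓ : Fin n, (fun i => g (ℓ, i)) ∈ C₀)
    (hgR : ∀ r : Fin n, (fun j => g (σ.symm (r, j))) ∈ C₀) :
    δ₀ * (δ₀ - lam) ≤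
      ((Finset.univ.filter fun e : Fin n × Fin d => f e ≠ g e).card : ℝ) / ((n : ℝ) * d) :=
  tanner_code_distance_general n d q lam δ₀ hδ₀0 σ hmix C₀ hC₀ f g hfg hfL hfR hgL hgR
end

section
/- (AEL distance amplification) Let n, d ≥ 1, q ≥ 2, let 0 ≤ λ and 0 ≤ δ₀ ≤ 1, let σ : Fin n × Fin d ≃ Fin n × Fin d be a bijection specifying a d-regular bipartite graph that is λ-mixing, and let C₀ ⊆ (Fin d → Fin q) be a code in which any two distinct codewords differ in at least δ₀·d coordinates. Let f, g : Fin n × Fin d → Fin q be such that every left row of f and every left row of g belongs to C₀. Define Δ^L(f,g) as the fraction of ℓ ∈ Fin n whose left rows of f and g differ, and Δ^R(f,g) as the fraction of r ∈ Fin n whose right rows of f and g differ. If Δ^L(f,g) > 0, then Δ^R(f,g) ≥ δ₀ − λ/Δ^L(f,g). -/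
/-- Fraction of left vertices `ℓ` at which the left rows of `f` and `g` differ. -/
noncomputable def deltaL (n d q : ℕ) (f g : Fin n × Fin d → Fin q) : ℝ :=
  ((Finset.univ.filter fun ℓ : Fin n =>
      (fun i : Fin d => f (ℓ, i)) ≠ fun i : Fin d => g (ℓ, i)).card : ℝ) / n

/-- Fraction of right vertices `r` at which the right rows of `f` and `g` differ. -/
noncomputable def deltaR (n d q : ℕ) (σ : Fin n × Fin d ≃ Fin n × Fin d)
    (f g : Fin n × Fin d → Fin q) : ℝ :=
  ((Finset.univ.filter fun r : Fin n =>
      (fun j : Fin d => f (σ.symm (r, j))) ≠ fun j : Fin d => g (σ.symm (r, j))).card : ℝ) / n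

/-!
Let `S` be the left vertices whose rows of `f` and `g` differ and `T` the right ones. By the
distance of `C₀`, at least `δ₀·d·|S|` edges carry different symbols, and each such edge joins `S`
to `T`. The mixing inequality applied to the indicators of `S` and `T` bounds the number of these
edges by `n·d·(|S|/n · |T|/n + λ)`, so `δ₀·Δ^L ≤ Δ^L·Δ^R + λ`; divide by `Δ^L`.
-/

open Finset

section Rows

variable {ι κ α : Type*} [Fintype ι] [Fintype κ] [DecidableEq α]

def diffRows (f g : ι × κ → α) : Finset ι :=
  {ℓ | (fun i => f (ℓ, i)) ≠ fun i => g (ℓ, i)}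

def edgesBetween [DecidableEq ι] (σ : ι × κ ≃ ι × κ) (S T : Finset ι) : Finset (ι × κ) :=
  {e | e.1 ∈ S ∧ (σ e).1 ∈ T}

lemma fst_mem_diffRows_of_ne {f g : ι × κ → α} {e : ι × κ} (h : f e ≠ g e) :
    e.1 ∈ diffRows f g := by
  simp only [diffRows, mem_filter, mem_univ, true_and]
  exact fun hrow => h (congrFun hrow e.2)

lemma card_ne_eq_sum_hammingDist (f g : ι × κ → α) :
    #{e | f e ≠ g e} = ∑ ℓ, hammingDist (fun i => f (ℓ, i)) (fun i => g (ℓ, i)) := by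
  simp only [card_filter, Fintype.sum_prod_type, hammingDist]

lemma mul_card_diffRows_le_card_ne {C : Set (κ → α)} {D : ℝ}
    (hC : ∀ u ∈ C, ∀ v ∈ C, u ≠ v → D ≤ hammingDist u v) {f g : ι × κ → α}
    (hf : ∀ ℓ, (fun i => f (ℓ, i)) ∈ C) (hg : ∀ ℓ, (fun i => g (ℓ, i)) ∈ C) :
    D * #(diffRows f g) ≤ #{e | f e ≠ g e} := by
  calc D * #(diffRows f g) = ∑ _ℓ ∈ diffRows f g, D := by rw [sum_const, nsmul_eq_mul, mul_comm]
    _ ≤ ∑ ℓ ∈ diffRows f g, (hammingDist (fun i => f (ℓ, i)) (fun i => g (ℓ, i)) : ℝ) :=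
        sum_le_sum fun ℓ hℓ => hC _ (hf ℓ) _ (hg ℓ) (by simpa [diffRows] using hℓ)
    _ ≤ ∑ ℓ, (hammingDist (fun i => f (ℓ, i)) (fun i => g (ℓ, i)) : ℝ) :=
        sum_le_sum_of_subset_of_nonneg (subset_univ _) fun _ _ _ => Nat.cast_nonneg _
    _ = #{e | f e ≠ g e} := by rw [card_ne_eq_sum_hammingDist]; push_cast; rfl

/-- The right rows of `f` are the left rows of `f ∘ σ.symm`. -/
lemma card_ne_le_card_edgesBetween [DecidableEq ι] (σ : ι × κ ≃ ι × κ) (f g : ι × κ → α) :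
    #{e | f e ≠ g e} ≤ #(edgesBetween σ (diffRows f g) (diffRows (f ∘ σ.symm) (g ∘ σ.symm))) := by
  refine card_le_card fun e he => ?_
  have hne : f e ≠ g e := (mem_filter.mp he).2
  refine mem_filter.mpr ⟨mem_univ e, fst_mem_diffRows_of_ne hne, fst_mem_diffRows_of_ne ?_⟩
  simpa using hne

end Rows

section Mixing

variable {n d : ℕ}

lemma sum_indicator_eq_card (S : Finset (Fin n)) :
    ∑ ℓ, (if ℓ ∈ S then (1 : ℝ) else 0) = #S := by
  simp

lemma sqrt_card_div_le_one (S : Finset (Fin n)) : √((#S : ℝ) / n) ≤ 1 :=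
  Real.sqrt_le_one.mpr <| div_le_one_of_le₀
    (by exact_mod_cast (card_le_univ S).trans_eq (Fintype.card_fin n)) n.cast_nonneg

lemma IsMixing.card_edgesBetween_le {σ : Fin n × Fin d ≃ Fin n × Fin d} {lam : ℝ}
    (hmix : IsMixing n d σ lam) (hlam : 0 ≤ lam) (S T : Finset (Fin n)) :
    (#(edgesBetween σ S T) : ℝ) / (n * d) ≤ #S / n * (#T / n) + lam := by
  have hedges : ∑ e : Fin n × Fin d,
      (if e.1 ∈ S then (1 : ℝ) else 0) * (if (σ e).1 ∈ T then 1 else 0) = #(edgesBetween σ S T) := by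
    simp only [ite_zero_mul_ite_zero, mul_one, sum_boole, edgesBetween]
  have hsq (U : Finset (Fin n)) : ∑ ℓ, (if ℓ ∈ U then (1 : ℝ) else 0) ^ 2 = #U := by
    simp only [ite_pow, one_pow, zero_pow two_ne_zero, sum_indicator_eq_card]
  have h := hmix (fun ℓ => if ℓ ∈ S then 1 else 0) (fun r => if r ∈ T then 1 else 0)
  simp only [hedges, hsq, sum_indicator_eq_card] at h
  have hsqrt : lam * √((#S : ℝ) / n) * √((#T : ℝ) / n) ≤ lam := by
    rw [mul_assoc]
    exact mul_le_of_le_one_right hlam <|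
      mul_le_one₀ (sqrt_card_div_le_one S) (Real.sqrt_nonneg _) (sqrt_card_div_le_one T)
  linarith [(abs_le.mp (h.trans hsqrt)).2]

end Mixing

theorem ael_distance_amplification_general (n d q : ℕ) (hn : 1 ≤ n) (hd : 1 ≤ d)
    (lam δ₀ : ℝ) (hlam : 0 ≤ lam)
    (σ : Fin n × Fin d ≃ Fin n × Fin d) (hmix : IsMixing n d σ lam)
    (C₀ : Set (Fin d → Fin q))
    (hC₀ : ∀ u ∈ C₀, ∀ v ∈ C₀, u ≠ v → δ₀ * d ≤ (hammingDist u v : ℝ))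
    (f g : Fin n × Fin d → Fin q)
    (hfL : ∀ ℓ : Fin n, (fun i => f (ℓ, i)) ∈ C₀)
    (hgL : ∀ ℓ : Fin n, (fun i => g (ℓ, i)) ∈ C₀)
    (hpos : 0 < deltaL n d q f g) :
    δ₀ - lam / deltaL n d q f g ≤ deltaR n d q σ f g := by
  set S := diffRows f g
  set T := diffRows (f ∘ σ.symm) (g ∘ σ.symm)
  have hL : deltaL n d q f g = #S / n := rfl
  have hR : deltaR n d q σ f g = #T / n := rfl
  have hcount : δ₀ * d * #S ≤ #(edgesBetween σ S T) :=
    (mul_card_diffRows_le_card_ne hC₀ hfL hgL).trans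
      (by exact_mod_cast card_ne_le_card_edgesBetween σ f g)
  have hnd : (0 : ℝ) < n * d := by positivity
  have hamplify : δ₀ * (#S / n) ≤ #S / n * (#T / n) + lam :=
    calc δ₀ * (#S / n) = δ₀ * d * #S / (n * d) := by field_simp
      _ ≤ #(edgesBetween σ S T) / (n * d) := by gcongr
      _ ≤ _ := hmix.card_edgesBetween_le hlam S T
  rw [hL] at hpos ⊢
  rw [hR, sub_le_comm, le_div_iff₀ hpos]
  linarith

/-- **AEL distance amplification.** If every left row of `f` and `g` lies in a code of
minimum distance `δ₀·d` and the graph is `λ`-mixing, then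
`Δ^R(f,g) ≥ δ₀ - λ / Δ^L(f,g)` whenever `Δ^L(f,g) > 0`. -/
theorem ael_distance_amplification (n d q : ℕ) (hn : 1 ≤ n) (hd : 1 ≤ d) (hq : 2 ≤ q)
    (lam δ₀ : ℝ) (hlam : 0 ≤ lam) (hδ₀0 : 0 ≤ δ₀) (hδ₀1 : δ₀ ≤ 1)
    (σ : Fin n × Fin d ≃ Fin n × Fin d) (hmix : IsMixing n d σ lam)
    (C₀ : Set (Fin d → Fin q))
    (hC₀ : ∀ u ∈ C₀, ∀ v ∈ C₀, u ≠ v → δ₀ * d ≤ (hammingDist u v : ℝ))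
    (f g : Fin n × Fin d → Fin q)
    (hfL : ∀ ℓ : Fin n, (fun i => f (ℓ, i)) ∈ C₀)
    (hgL : ∀ ℓ : Fin n, (fun i => g (ℓ, i)) ∈ C₀)
    (hpos : 0 < deltaL n d q f g) :
    δ₀ - lam / deltaL n d q f g ≤ deltaR n d q σ f g :=
  ael_distance_amplification_general n d q hn hd lam δ₀ hlam σ hmix C₀ hC₀ f g hfL hgL hpos
end

section
/- (Local distributions of pseudoexpectations) Let t be an even positive integer, let m be a finite index set and q ≥ 2, and let Ẽ be a degree-t pseudoexpectation over the variables {Z_{i,j} : i ∈ m, j ∈ Fin q}. Then for every subset S ⊆ m with |S| ≤ t/2: (i) for every α : S → Fin q, Ẽ[∏_{s∈S} Z_{s,α(s)}] ≥ 0; and (ii) Σ_{α : S → Fin q} Ẽ[∏_{s∈S} Z_{s,α(s)}] = 1. In other words, the values {Ẽ[∏_{s∈S} Z_{s,α(s)}]}_{α} form a probability distribution on (S → Fin q). -/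
open MvPolynomial

/-- A degree-`t` pseudoexpectation over the variables `Z_{i,j}`, `i ∈ m`, `j ∈ Fin q`:
an ℝ-linear functional on `ℝ[Z]` that maps `1` to `1`, is nonnegative on squares of
polynomials of total degree at most `t/2`, and respects the Boolean constraints
`Z_{i,j}² = Z_{i,j}` and the partition constraints `Σ_j Z_{i,j} = 1`. -/
def IsPseudoExpectation (m : Type*) (q t : ℕ)
    (E : MvPolynomial (m × Fin q) ℝ →ₗ[ℝ] ℝ) : Prop :=
  E 1 = 1 ∧
  (∀ p : MvPolynomial (m × Fin q) ℝ, p.totalDegree ≤ t / 2 → 0 ≤ E (p ^ 2)) ∧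
  (∀ (i : m) (j : Fin q) (p : MvPolynomial (m × Fin q) ℝ),
      p.totalDegree + 2 ≤ t → E (p * (X (i, j) ^ 2 - X (i, j))) = 0) ∧
  (∀ (i : m) (p : MvPolynomial (m × Fin q) ℝ),
      p.totalDegree + 1 ≤ t → E (p * ((∑ j : Fin q, X (i, j)) - 1)) = 0)

/-- **Local distributions of pseudoexpectations.** For any subset `S` of at most `t/2`
variables, the values `Ẽ[∏_{s ∈ S} Z_{s, α s}]`, `α : S → Fin q`, are nonnegative and sum
to `1`, i.e. they form a probability distribution on `S → Fin q`. -/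
theorem pseudoexpectation_local_distribution (m : Type*) [Fintype m] [DecidableEq m]
    (q t : ℕ) (hq : 2 ≤ q) (ht : Even t) (htpos : 0 < t)
    (E : MvPolynomial (m × Fin q) ℝ →ₗ[ℝ] ℝ) (hE : IsPseudoExpectation m q t E)
    (S : Finset m) (hS : S.card ≤ t / 2) :
    (∀ α : S → Fin q, 0 ≤ E (∏ s : S, X ((s : m), α s))) ∧
    (∑ α : S → Fin q, E (∏ s : S, X ((s : m), α s))) = 1 := by
  obtain ⟨hE1, hEsq, hEbool, hEsum⟩ := hE
  obtain ⟨r, rfl⟩ := ht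
  have htr : (r + r) / 2 = r := by omega
  rw [htr] at hS
  -- degree of a product of variables
  have hdegprod : ∀ (T : Finset m) (β : m → Fin q),
      (∏ s ∈ T, X (s, β s) : MvPolynomial (m × Fin q) ℝ).totalDegree ≤ T.card := by
    intro T β
    calc (∏ s ∈ T, X (s, β s) : MvPolynomial (m × Fin q) ℝ).totalDegree
        ≤ ∑ s ∈ T, (X (s, β s) : MvPolynomial (m × Fin q) ℝ).totalDegree :=
          totalDegree_finset_prod T _
      _ ≤ T.card := by simp [totalDegree_X]
  have hdegsum : ∀ i : m,
      ((∑ j : Fin q, X (i, j)) : MvPolynomial (m × Fin q) ℝ).totalDegree ≤ 1 := by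
    intro i
    refine (totalDegree_finset_sum _ _).trans ?_
    exact Finset.sup_le fun j _ => by simp [totalDegree_X]
  -- squaring a product of variables does not change the pseudoexpectation
  have key1 : ∀ (T : Finset m) (β : m → Fin q) (p : MvPolynomial (m × Fin q) ℝ),
      p.totalDegree + 2 * T.card ≤ r + r →
      E (p * ∏ s ∈ T, X (s, β s) ^ 2) = E (p * ∏ s ∈ T, X (s, β s)) := by
    intro T
    induction T using Finset.induction_on with
    | empty => intro β p hp; simp
    | @insert a T ha ih =>
      intro β p hp
      rw [Finset.card_insert_of_notMem ha] at hp
      rw [Finset.prod_insert ha, Finset.prod_insert ha]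
      have hT := hdegprod T β
      have e1 : p * (X (a, β a) ^ 2 * ∏ s ∈ T, X (s, β s) ^ 2)
          = (p * X (a, β a) ^ 2) * ∏ s ∈ T, X (s, β s) ^ 2 := by ring
      have e2 : (p * X (a, β a) ^ 2) * ∏ s ∈ T, X (s, β s)
          = (p * ∏ s ∈ T, X (s, β s)) * X (a, β a) ^ 2 := by ring
      have e3 : p * (X (a, β a) * ∏ s ∈ T, X (s, β s))
          = (p * ∏ s ∈ T, X (s, β s)) * X (a, β a) := by ring
      rw [e1, e3]
      rw [ih β (p * X (a, β a) ^ 2) (by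
        have h1 := totalDegree_mul p (X (a, β a) ^ 2 : MvPolynomial (m × Fin q) ℝ)
        have h2 : (X (a, β a) ^ 2 : MvPolynomial (m × Fin q) ℝ).totalDegree ≤ 2 := by
          simpa [totalDegree_X] using
            totalDegree_pow (X (a, β a) : MvPolynomial (m × Fin q) ℝ) 2
        omega)]
      rw [e2]
      have hb := hEbool a (β a) (p * ∏ s ∈ T, X (s, β s)) (by
        have h1 := totalDegree_mul p (∏ s ∈ T, X (s, β s) : MvPolynomial (m × Fin q) ℝ)
        omega)
      rw [mul_sub, map_sub, sub_eq_zero] at hb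
      exact hb
  -- multiplying by ∏ (∑_j Z_{s,j}) does not change the pseudoexpectation
  have key2 : ∀ (T : Finset m) (p : MvPolynomial (m × Fin q) ℝ),
      p.totalDegree + T.card ≤ r + r →
      E (p * ∏ s ∈ T, (∑ j : Fin q, X (s, j))) = E p := by
    intro T
    induction T using Finset.induction_on with
    | empty => intro p hp; simp
    | @insert a T ha ih =>
      intro p hp
      rw [Finset.card_insert_of_notMem ha] at hp
      rw [Finset.prod_insert ha]
      have e1 : p * ((∑ j : Fin q, X (a, j)) * ∏ s ∈ T, (∑ j : Fin q, X (s, j)))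
          = (p * ∑ j : Fin q, X (a, j)) * ∏ s ∈ T, (∑ j : Fin q, X (s, j)) := by ring
      rw [e1, ih (p * ∑ j : Fin q, X (a, j)) (by
        have h1 := totalDegree_mul p (∑ j : Fin q, X (a, j) : MvPolynomial (m × Fin q) ℝ)
        have h2 := hdegsum a
        omega)]
      have hb := hEsum a p (by omega)
      rw [mul_sub, mul_one, map_sub, sub_eq_zero] at hb
      exact hb
  constructor
  · intro α
    have hq0 : 0 < q := by omega
    set β : m → Fin q := fun i => if h : i ∈ S then α ⟨i, h⟩ else ⟨0, hq0⟩ with hβ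
    have hprod : (∏ s : S, X ((s : m), α s) : MvPolynomial (m × Fin q) ℝ)
        = ∏ s ∈ S, X (s, β s) := by
      rw [← Finset.prod_attach S (fun s => (X (s, β s) : MvPolynomial (m × Fin q) ℝ))]
      rw [Finset.univ_eq_attach]
      exact Finset.prod_congr rfl fun x _ => by simp [hβ, x.2]
    rw [hprod]
    have h1 := key1 S β 1 (by simpa using by omega)
    rw [one_mul, one_mul, Finset.prod_pow] at h1
    rw [← h1]
    exact hEsq _ ((hdegprod S β).trans (by omega))
  · rw [← map_sum]
    have hswap : (∑ α : S → Fin q, ∏ s : S, (X ((s : m), α s) : MvPolynomial (m × Fin q) ℝ))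
        = ∏ s ∈ S, (∑ j : Fin q, X (s, j)) := by
      rw [← Finset.prod_coe_sort S (fun s => (∑ j : Fin q, X (s, j) : MvPolynomial (m × Fin q) ℝ))]
      exact (Fintype.prod_sum
        (fun (s : S) (j : Fin q) => (X ((s : m), j) : MvPolynomial (m × Fin q) ℝ))).symm
    rw [hswap]
    have h2 := key2 S 1 (by simpa using by omega)
    rw [one_mul] at h2
    rw [h2, hE1]
end

section
/- (Threshold rounding) Let n ≥ 1, q ≥ 2, let w : Fin n → Fin q → ℝ be nonnegative weights with Σ_{j ∈ Fin q} w i j = 1 for every i, let h : Fin n → Fin q, and let δ_dec ≥ 0 satisfy (1/n)·Σ_i (1 − w i (h i)) ≤ δ_dec. For i ∈ Fin n and j ∈ Fin q define the cumulative sum c i j = Σ_{j' ≤ j} w i j'. Then there exists θ ∈ [0,1) such that the word h' : Fin n → Fin q defined by h' i = the least j ∈ Fin q with θ < c i j satisfies Δ(h', h) ≤ δ_dec. -/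
/-- Cumulative sums `c i j = Σ_{j' ≤ j} w i j'` of a weight collection. -/
def cumul {n q : ℕ} (w : Fin n → Fin q → ℝ) (i : Fin n) (j : Fin q) : ℝ :=
  ∑ j' ∈ Finset.univ.filter (· ≤ j), w i j'

open MeasureTheory Finset

section FirstMoment

variable {α ι : Type*} [MeasurableSpace α] [Fintype ι] {μ : Measure α} {s : Set α}

theorem exists_card_notMem_le_sum_one_sub_measureReal (hs : μ s = 1) {T : ι → Set α}
    [∀ i, DecidablePred (· ∈ T i)] (hT : ∀ i, MeasurableSet (T i)) (hTs : ∀ i, T i ⊆ s) :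
    ∃ x ∈ s, (#{i | x ∉ T i} : ℝ) ≤ ∑ i, (1 - μ.real (T i)) := by
  have hs_real : μ.real s = 1 := by simp [measureReal_def, hs]
  have hint : ∀ i, IntegrableOn ((T i)ᶜ.indicator (1 : α → ℝ)) s μ := fun i =>
    (integrableOn_const (by simp [hs])).indicator (hT i).compl
  obtain ⟨x, hxs, hx⟩ := exists_le_setAverage (f := fun x => ∑ i, (T i)ᶜ.indicator 1 x)
    (by simp [hs]) (by simp [hs]) (integrable_finsetSum _ fun i _ => hint i)
  refine ⟨x, hxs, ?_⟩
  have hcard : (#{i | x ∉ T i} : ℝ) = ∑ i, (T i)ᶜ.indicator (1 : α → ℝ) x := by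
    simp [Set.indicator_apply, Finset.sum_ite]
  have haverage : ⨍ y in s, ∑ i, (T i)ᶜ.indicator (1 : α → ℝ) y ∂μ = ∑ i, (1 - μ.real (T i)) := by
    rw [setAverage_eq, hs_real, inv_one, one_smul, integral_finsetSum _ fun i _ => hint i]
    refine Finset.sum_congr rfl fun i _ => ?_
    rw [integral_indicator_one (hT i).compl, measureReal_restrict_apply (hT i).compl,
      ← Set.sdiff_eq_compl_inter, measureReal_sdiff (hTs i) (hT i) (by simp [hs]), hs_real]
  rw [hcard, ← haverage]
  exact hx

end FirstMoment

section Cumul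

variable {n q : ℕ} {w : Fin n → Fin q → ℝ} {i : Fin n}

theorem le_cumul (hw : ∀ j, 0 ≤ w i j) (j : Fin q) : w i j ≤ cumul w i j :=
  single_le_sum (fun k _ => hw k) (by simp)

theorem cumul_le_one (hw : ∀ j, 0 ≤ w i j) (hw1 : ∑ j, w i j = 1) (j : Fin q) :
    cumul w i j ≤ 1 :=
  hw1 ▸ sum_le_sum_of_subset_of_nonneg (filter_subset _ _) fun k _ _ => hw k

theorem cumul_add_le_cumul (hw : ∀ j, 0 ≤ w i j) {k j : Fin q} (hkj : k < j) :
    cumul w i k + w i j ≤ cumul w i j := by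
  have hj : j ∉ ({l | l ≤ k} : Finset (Fin q)) := by simpa using hkj
  rw [cumul, add_comm, ← sum_insert hj]
  refine sum_le_sum_of_subset_of_nonneg ?_ fun l _ _ => hw l
  intro l hl
  simp only [mem_insert, mem_filter, mem_univ, true_and] at hl ⊢
  rcases hl with rfl | hl
  · exact le_rfl
  · exact hl.trans hkj.le

theorem isLeast_lt_cumul_of_mem_Ico (hw : ∀ j, 0 ≤ w i j) {θ : ℝ} {j : Fin q}
    (hθ : θ ∈ Set.Ico (cumul w i j - w i j) (cumul w i j)) :
    IsLeast {k | θ < cumul w i k} j := by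
  refine ⟨hθ.2, fun k (hk : θ < cumul w i k) => not_lt.1 fun hkj => ?_⟩
  linarith [cumul_add_le_cumul hw hkj, hθ.1]

theorem exists_isLeast_lt_cumul (hw1 : ∑ j, w i j = 1) {θ : ℝ} (hθ : θ < 1) :
    ∃ j, IsLeast {k | θ < cumul w i k} j := by
  have : Nonempty (Fin q) := by
    by_contra hempty
    simp [not_nonempty_iff.1 hempty] at hw1
  obtain ⟨jmax, hjmax⟩ : ∃ jmax : Fin q, ∀ k, k ≤ jmax := Finite.exists_max id
  have hlast : cumul w i jmax = 1 := by
    rw [← hw1, cumul, filter_true_of_mem fun k _ => hjmax k]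
  have hne : {k | θ < cumul w i k}.Nonempty := ⟨jmax, by simpa [hlast] using hθ⟩
  exact ⟨wellFounded_lt.min _ hne, wellFounded_lt.min_mem _ hne,
    fun _ hk => wellFounded_lt.min_le hk⟩

end Cumul

theorem threshold_rounding_general (n q : ℕ)
    (w : Fin n → Fin q → ℝ) (hw : ∀ i j, 0 ≤ w i j) (hw1 : ∀ i, ∑ j, w i j = 1)
    (h : Fin n → Fin q) (δdec : ℝ)
    (hag : (1 / (n : ℝ)) * ∑ i, (1 - w i (h i)) ≤ δdec) :
    ∃ θ ∈ Set.Ico (0 : ℝ) 1, ∃ h' : Fin n → Fin q,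
      (∀ i, IsLeast {j : Fin q | θ < cumul w i j} (h' i)) ∧ fracDist h' h ≤ δdec := by
  set T : Fin n → Set ℝ := fun i => Set.Ico (cumul w i (h i) - w i (h i)) (cumul w i (h i))
  have hT_sub : ∀ i, T i ⊆ Set.Ico 0 1 := fun i =>
    Set.Ico_subset_Ico (sub_nonneg.2 (le_cumul (hw i) _)) (cumul_le_one (hw i) (hw1 i) _)
  have hT_vol : ∀ i, volume.real (T i) = w i (h i) := fun i => by
    rw [Real.volume_real_Ico_of_le (by linarith [hw i (h i)])]
    ring
  obtain ⟨θ, hθ, hcard⟩ := exists_card_notMem_le_sum_one_sub_measureReal (μ := volume)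
    (T := T) (by simp) (fun i => measurableSet_Ico) hT_sub
  choose h' hh' using fun i => exists_isLeast_lt_cumul (hw1 i) hθ.2
  refine ⟨θ, hθ, h', hh', ?_⟩
  have hdist : hammingDist h' h ≤ #{i | θ ∉ T i} := card_le_card fun i => by
    simp only [mem_filter, mem_univ, true_and]
    exact fun hne hmem => hne ((hh' i).unique (isLeast_lt_cumul_of_mem_Ico (hw i) hmem))
  have hcount : (hammingDist h' h : ℝ) ≤ ∑ i, (1 - w i (h i)) := by
    simp only [hT_vol] at hcard
    exact (Nat.cast_le.2 hdist).trans hcard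
  calc fracDist h' h ≤ (∑ i, (1 - w i (h i))) / n :=
        div_le_div_of_nonneg_right hcount n.cast_nonneg
    _ ≤ δdec := by rwa [div_eq_inv_mul, ← one_div]

/-- **Threshold rounding.** If the weights `w i` are probability distributions and the
codeword `h` has expected agreement loss `𝔼_i [1 − w i (h i)] ≤ δ_dec`, then there is a
threshold `θ ∈ [0,1)` such that rounding each coordinate `i` to the least `j` with
`θ < c i j` yields a word `h'` with `Δ(h', h) ≤ δ_dec`. -/
theorem threshold_rounding (n q : ℕ) (hn : 1 ≤ n) (hq : 2 ≤ q)
    (w : Fin n → Fin q → ℝ) (hw : ∀ i j, 0 ≤ w i j) (hw1 : ∀ i, ∑ j, w i j = 1)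
    (h : Fin n → Fin q) (δdec : ℝ) (hδdec : 0 ≤ δdec)
    (hag : (1 / (n : ℝ)) * ∑ i, (1 - w i (h i)) ≤ δdec) :
    ∃ θ ∈ Set.Ico (0 : ℝ) 1, ∃ h' : Fin n → Fin q,
      (∀ i, IsLeast {j : Fin q | θ < cumul w i j} (h' i)) ∧ fracDist h' h ≤ δdec :=
  threshold_rounding_general n q w hw hw1 h δdec hag
end
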